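/- arXiv:2507.11235 — 6 statements merged into one kernel-verified Lean document; each statement's English description precedes it below -/
import Mathlib

section
/- Let s be a multiset of elements of ZMod 5 with card s = 5. Then the sum of s is 0 if and only if there exists c in ZMod 5 such that the image of s under the map x ↦ c - x equals s. -/
set_option maxRecDepth 100000 in
private lemma zmod5_aux : ∀ a b c d e : ZMod 5,
    a + b + c + d + e = 0 →
      ∃ k : ZMod 5, Multiset.map (fun x => k - x) ({a, b, c, d, e} : Multiset (ZMod 5))
        = ({a, b, c, d, e} : Multiset (ZMod 5)) := by
  decide

theorem zmod5_sum_zero_iff_symmetric (s : Multiset (ZMod 5)) (hs : Multiset.card s = 5) :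
    s.sum = 0 ↔ ∃ c : ZMod 5, s.map (fun x => c - x) = s := by
  obtain ⟨l, rfl⟩ := s.exists_rep
  simp only [show ∀ L : List (ZMod 5), (⟦L⟧ : Multiset (ZMod 5)) = (↑L : Multiset (ZMod 5)) from fun _ => rfl] at *
  have hl : l.length = 5 := by simpa using hs
  match l, hl with
  | [a, b, c, d, e], _ =>
    have hrw : (↑[a,b,c,d,e] : Multiset (ZMod 5)) = {a, b, c, d, e} := rfl
    rw [hrw]
    constructor
    · intro h
      have h' : a + b + c + d + e = 0 := by
        have : a + (b + (c + (d + (e + 0)))) = 0 := by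
          simpa [Multiset.sum_cons] using h
        linear_combination this
      exact zmod5_aux a b c d e h'
    · rintro ⟨k, hk⟩
      have h1 : (Multiset.map (fun x => k - x) ({a,b,c,d,e} : Multiset (ZMod 5))).sum
          = ({a,b,c,d,e} : Multiset (ZMod 5)).sum := by rw [hk]
      simp only [Multiset.insert_eq_cons, Multiset.map_cons, Multiset.map_singleton, Multiset.sum_cons,
        Multiset.sum_singleton] at h1 ⊢
      have h5 : (5:ZMod 5) = 0 := rfl
      linear_combination 2 * h1 + (a+b+c+d+e-2*k) * h5
end

section
/- Let s be a multiset of elements of ZMod 3 with card s = 3. Then the sum of s is 0 if and only if there exists c in ZMod 3 such that the image of s under the map x ↦ c - x equals s. -/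
theorem zmod3_sum_zero_iff_symmetric (s : Multiset (ZMod 3)) (hs : Multiset.card s = 3) :
    s.sum = 0 ↔ ∃ c : ZMod 3, s.map (fun x => c - x) = s := by
  obtain ⟨a, b, c, rfl⟩ := Multiset.card_eq_three.mp hs
  revert a b c
  decide
end

section
/- Let s be a multiset of elements of ZMod 4 with card s = 4. If the sum of s is 0, then there exists c in ZMod 4 such that the image of s under the map x ↦ c - x equals s. -/
lemma card4 {α : Type*} (s : Multiset α) (hs : Multiset.card s = 4) :
    ∃ a b c d, s = a ::ₘ b ::ₘ c ::ₘ d ::ₘ 0 := by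
  rcases s with ⟨l⟩
  match l, hs with
  | [a,b,c,d], _ => exact ⟨a,b,c,d, rfl⟩

theorem zmod4_sum_zero_imp_symmetric (s : Multiset (ZMod 4)) (hs : Multiset.card s = 4)
    (h : s.sum = 0) : ∃ c : ZMod 4, s.map (fun x => c - x) = s := by
  obtain ⟨a, b, c, d, rfl⟩ := card4 s hs
  simp only [Multiset.sum_cons, Multiset.sum_zero, add_zero] at h
  revert h
  revert a b c d
  decide
end

section
/- Let s be a finite set of vectors in (Fin 6 → ZMod 2) with card s = 7 and with the zero vector not in s. Then there exists a nonempty subset t of s whose elements sum to the zero vector. -/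
theorem proset_seven_cards_have_set (s : Finset (Fin 6 → ZMod 2))
    (hcard : s.card = 7) (h0 : (0 : Fin 6 → ZMod 2) ∉ s) :
    ∃ t ⊆ s, t.Nonempty ∧ ∑ x ∈ t, x = 0 := by
  have hlt : (Finset.univ : Finset (Fin 6 → ZMod 2)).card < s.powerset.card := by
    rw [Finset.card_powerset, hcard]
    simp [Fintype.card_fun]
  obtain ⟨t1, ht1, t2, ht2, hne, heq⟩ :=
    Finset.exists_ne_map_eq_of_card_lt_of_maps_to hlt
      (fun t _ => Finset.mem_univ (∑ x ∈ t, x))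
  rw [Finset.mem_powerset] at ht1 ht2
  refine ⟨symmDiff t1 t2, ?_, ?_, ?_⟩
  · intro x hx
    rw [Finset.mem_symmDiff] at hx
    rcases hx with ⟨h, _⟩ | ⟨h, _⟩
    · exact ht1 h
    · exact ht2 h
  · rw [Finset.nonempty_iff_ne_empty]
    intro h
    exact hne (symmDiff_eq_bot.mp h)
  · have hker : ∀ u : Finset (Fin 6 → ZMod 2), 2 • (∑ x ∈ u, x) = 0 := by
      intro u
      have : ∀ x : Fin 6 → ZMod 2, 2 • x = 0 := by
        intro x; funext i
        simp [two_smul, CharTwo.add_self_eq_zero]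
      rw [Finset.smul_sum]
      exact Finset.sum_eq_zero fun x _ => this x
    have hsd : symmDiff t1 t2 = (t1 \ t2) ∪ (t2 \ t1) := rfl
    rw [hsd, Finset.sum_union disjoint_sdiff_sdiff]
    have h1 : ∑ x ∈ t1 \ t2, x = ∑ x ∈ t1, x - ∑ x ∈ t1 ∩ t2, x := by
      rw [eq_sub_iff_add_eq, ← Finset.sum_union (Finset.disjoint_sdiff_inter t1 t2),
        Finset.sdiff_union_inter]
    have h2 : ∑ x ∈ t2 \ t1, x = ∑ x ∈ t2, x - ∑ x ∈ t2 ∩ t1, x := by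
      rw [eq_sub_iff_add_eq, ← Finset.sum_union (Finset.disjoint_sdiff_inter t2 t1),
        Finset.sdiff_union_inter]
    have ha := hker t2
    have hb := hker (t1 ∩ t2)
    rw [two_smul] at ha hb
    rw [h1, h2, Finset.inter_comm t2 t1, heq, sub_add_sub_comm, ha, hb, sub_zero]
end

section
/- Every finite set s of vectors in (Fin 6 → ZMod 2) with card s = 10 contains a subset t with card t = 4 whose elements sum to the zero vector. -/
open Finset Module

theorem evenquads_ten_cards_have_quad (s : Finset (Fin 6 → ZMod 2))
    (hcard : s.card = 10) :
    ∃ t ⊆ s, t.card = 4 ∧ ∑ x ∈ t, x = 0 := by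
  by_contra hq
  push_neg at hq
  have hzmod2 : ∀ c : ZMod 2, c = 0 ∨ c = 1 := by decide
  let L : (↥s → ZMod 2) →ₗ[ZMod 2] (Fin 6 → ZMod 2) :=
    { toFun := fun f => ∑ x : ↥s, f x • (x : Fin 6 → ZMod 2)
      map_add' := by intro f g; simp [add_smul, Finset.sum_add_distrib]
      map_smul' := by intro c f; simp [Finset.smul_sum, smul_smul] }
  let P : (↥s → ZMod 2) →ₗ[ZMod 2] ZMod 2 :=
    { toFun := fun f => ∑ x : ↥s, f x
      map_add' := by intro f g; simp [Finset.sum_add_distrib]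
      map_smul' := by intro c f; simp [Finset.mul_sum] }
  let W : Submodule (ZMod 2) (↥s → ZMod 2) := LinearMap.ker L ⊓ LinearMap.ker P
  haveI : Fintype W := Fintype.ofFinite W
  have hdim : 3 ≤ finrank (ZMod 2) W := by
    have hdom : finrank (ZMod 2) (↥s → ZMod 2) = 10 := by
      simp [Module.finrank_fintype_fun_eq_card, Fintype.card_coe, hcard]
    have hL : 4 ≤ finrank (ZMod 2) (LinearMap.ker L) := by
      have := LinearMap.finrank_range_add_finrank_ker L
      have hr : finrank (ZMod 2) (LinearMap.range L) ≤ 6 := by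
        have := Submodule.finrank_le (LinearMap.range L)
        simpa [Module.finrank_fintype_fun_eq_card] using this
      omega
    have hP : 9 ≤ finrank (ZMod 2) (LinearMap.ker P) := by
      have := LinearMap.finrank_range_add_finrank_ker P
      have hr : finrank (ZMod 2) (LinearMap.range P) ≤ 1 := by
        have := Submodule.finrank_le (LinearMap.range P)
        simpa using this
      omega
    have hsup := Submodule.finrank_sup_add_finrank_inf_eq (LinearMap.ker L) (LinearMap.ker P)
    have hsup' : finrank (ZMod 2) ↥(LinearMap.ker L ⊔ LinearMap.ker P) ≤ 10 := by
      have := Submodule.finrank_le (LinearMap.ker L ⊔ LinearMap.ker P)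
      omega
    have h3 : 3 ≤ finrank (ZMod 2) ↥(LinearMap.ker L ⊓ LinearMap.ker P) := by omega
    exact h3
  have hW : 8 ≤ Fintype.card W := by
    have hc := card_eq_pow_finrank (K := ZMod 2) (V := W)
    rw [hc]
    calc (8:ℕ) = 2^3 := rfl
    _ ≤ 2 ^ finrank (ZMod 2) W := Nat.pow_le_pow_right (by norm_num) hdim
    _ = Fintype.card (ZMod 2) ^ finrank (ZMod 2) W := by simp
  let wt : W → ℕ := fun f => (univ.filter (fun x : ↥s => (f : ↥s → ZMod 2) x = 1)).card
  -- each nonzero f in W has weight ≥ 6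
  have hwt : ∀ f : W, f ≠ 0 → 6 ≤ wt f := by
    intro f hf
    set A : Finset ↥s := univ.filter (fun x : ↥s => (f : ↥s → ZMod 2) x = 1) with hA
    set t : Finset (Fin 6 → ZMod 2) := Finset.image Subtype.val A with ht
    have hts : t ⊆ s := by
      intro x hx
      simp only [ht, Finset.mem_image] at hx
      obtain ⟨y, _, rfl⟩ := hx
      exact y.2
    have htc : t.card = wt f := Finset.card_image_of_injective _ Subtype.val_injective
    have hzmod : ∀ x : ↥s, ((f : ↥s → ZMod 2) x) • (x : Fin 6 → ZMod 2) =
        if (f : ↥s → ZMod 2) x = 1 then (x : Fin 6 → ZMod 2) else 0 := by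
      intro x
      rcases hzmod2 ((f : ↥s → ZMod 2) x) with h | h <;> simp [h]
    -- sum over t is zero
    have hker : f.1 ∈ LinearMap.ker L := f.2.1
    have hsum : ∑ x ∈ t, x = 0 := by
      rw [ht, Finset.sum_image (fun a _ b _ h => Subtype.val_injective h)]
      have : ∑ x ∈ A, (x : Fin 6 → ZMod 2) = ∑ x : ↥s, ((f : ↥s → ZMod 2) x) • (x : Fin 6 → ZMod 2) := by
        rw [hA]
        rw [Finset.sum_filter]
        exact Finset.sum_congr rfl (fun x _ => (hzmod x).symm)
      rw [this]
      exact hker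
    -- weight is even
    have heven : 2 ∣ t.card := by
      have hker2 : f.1 ∈ LinearMap.ker P := f.2.2
      have h1 : ((t.card : ℕ) : ZMod 2) = 0 := by
        have : (A.card : ZMod 2) = ∑ x : ↥s, (f : ↥s → ZMod 2) x := by
          rw [hA, Finset.card_filter]
          push_cast
          rw [Finset.sum_congr rfl (fun x _ => ?_)]
          rcases hzmod2 ((f : ↥s → ZMod 2) x) with h | h <;> simp [h]
        rw [ht, Finset.card_image_of_injective _ Subtype.val_injective, this]
        exact hker2
      exact (ZMod.natCast_eq_zero_iff _ 2).1 h1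
    -- weight ≠ 0
    have hne : t.card ≠ 0 := by
      intro h0
      apply hf
      have hAe : A = ∅ := by
        have := Finset.card_image_of_injective A Subtype.val_injective
        rw [← ht] at this
        rw [h0] at this
        exact Finset.card_eq_zero.1 this.symm
      ext x
      have hx : x ∉ A := by rw [hAe]; exact Finset.notMem_empty x
      rw [hA] at hx
      simp only [Finset.mem_filter, Finset.mem_univ, true_and] at hx
      rcases hzmod2 ((f : ↥s → ZMod 2) x) with h | h
      · exact h
      · exact absurd h hx
    -- weight ≠ 2
    have hne2 : t.card ≠ 2 := by
      intro h2
      obtain ⟨a, b, hab, htab⟩ := Finset.card_eq_two.1 h2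
      rw [htab] at hsum
      rw [Finset.sum_pair hab] at hsum
      apply hab
      have : a = -b := eq_neg_of_add_eq_zero_left hsum
      rw [this]
      ext i
      simp [CharTwo.neg_eq]
    -- weight ≠ 4
    have hne4 : t.card ≠ 4 := fun h4 => hq t hts h4 hsum
    have h135 : t.card ≠ 1 ∧ t.card ≠ 3 ∧ t.card ≠ 5 := by
      refine ⟨?_, ?_, ?_⟩ <;> intro h <;> rw [h] at heven <;> omega
    rw [← htc]
    omega
  -- double counting
  let c : ↥s → ℕ := fun x => (univ.filter (fun f : W => (f : ↥s → ZMod 2) x = 1)).card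
  have hswap : ∑ f : W, wt f = ∑ x : ↥s, c x := by
    simp only [wt, c, Finset.card_filter]
    rw [Finset.sum_comm]
  have hupper : ∀ x : ↥s, 2 * c x ≤ Fintype.card W := by
    intro x
    by_cases hex : ∃ g : W, (g : ↥s → ZMod 2) x = 1
    · obtain ⟨g, hg⟩ := hex
      have hmap : ∀ f ∈ univ.filter (fun f : W => (f : ↥s → ZMod 2) x = 1),
          f + g ∈ univ.filter (fun f : W => (f : ↥s → ZMod 2) x = 0) := by
        intro f hf
        simp only [Finset.mem_filter, Finset.mem_univ, true_and] at hf ⊢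
        have : ((f + g : W) : ↥s → ZMod 2) x = (f : ↥s → ZMod 2) x + (g : ↥s → ZMod 2) x := rfl
        rw [this, hf, hg]
        decide
      have hinj : Set.InjOn (fun f : W => f + g)
          (univ.filter (fun f : W => (f : ↥s → ZMod 2) x = 1)) := by
        intro a _ b _ hab
        exact add_right_cancel hab
      have hle := Finset.card_le_card_of_injOn _ hmap hinj
      have hpart := Finset.card_filter_add_card_filter_not
        (s := (univ : Finset W)) (p := fun f : W => (f : ↥s → ZMod 2) x = 1)
      have heq0 : univ.filter (fun f : W => ¬ (f : ↥s → ZMod 2) x = 1)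
          = univ.filter (fun f : W => (f : ↥s → ZMod 2) x = 0) := by
        apply Finset.filter_congr
        intro f _
        rcases hzmod2 ((f : ↥s → ZMod 2) x) with h | h <;> simp [h]
      rw [heq0, Finset.card_univ] at hpart
      simp only [c]
      omega
    · have hc0 : c x = 0 := by
        simp only [c, Finset.card_eq_zero, Finset.filter_eq_empty_iff]
        intro f _
        exact fun h => hex ⟨f, h⟩
      omega
  have hub : 2 * ∑ f : W, wt f ≤ 10 * Fintype.card W := by
    rw [hswap, Finset.mul_sum]
    calc ∑ x : ↥s, 2 * c x ≤ ∑ _x : ↥s, Fintype.card W :=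
          Finset.sum_le_sum (fun x _ => hupper x)
    _ = 10 * Fintype.card W := by
        rw [Finset.sum_const, Finset.card_univ, Fintype.card_coe, hcard, smul_eq_mul]
  have hlb : 6 * (Fintype.card W - 1) ≤ ∑ f : W, wt f := by
    have h1 : ∑ _f ∈ univ.erase (0 : W), 6 ≤ ∑ f ∈ univ.erase (0 : W), wt f :=
      Finset.sum_le_sum (fun f hf => hwt f (Finset.ne_of_mem_erase hf))
    have h2 : ∑ f ∈ univ.erase (0 : W), wt f ≤ ∑ f : W, wt f :=
      Finset.sum_le_sum_of_subset (Finset.erase_subset _ _)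
    have h3 : (univ.erase (0 : W)).card = Fintype.card W - 1 := by
      rw [Finset.card_erase_of_mem (Finset.mem_univ _), Finset.card_univ]
    rw [Finset.sum_const, h3, smul_eq_mul] at h1
    omega
  omega
end

section
/- Let G be a group and a, b in G. Suppose (b * a⁻¹)^3 = 1, and let c = b * a⁻¹ * b. Then every one of the six orderings of the cards a, b, c forms an arithmetic set; that is, all of the following hold: b * a⁻¹ = c * b⁻¹, c * b⁻¹ = a * c⁻¹, a * c⁻¹ = b * a⁻¹, c * a⁻¹ = b * c⁻¹, a * b⁻¹ = c * a⁻¹, and b * c⁻¹ = a * b⁻¹. -/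
theorem order_three_ratio_set_in_any_order {G : Type*} [Group G] (a b c : G)
    (h : (b * a⁻¹) ^ 3 = 1) (hc : c = b * a⁻¹ * b) :
    b * a⁻¹ = c * b⁻¹ ∧ c * b⁻¹ = a * c⁻¹ ∧ a * c⁻¹ = b * a⁻¹ ∧
      c * a⁻¹ = b * c⁻¹ ∧ a * b⁻¹ = c * a⁻¹ ∧ b * c⁻¹ = a * b⁻¹ := by
  subst hc
  have hinv : a * b⁻¹ = (b * a⁻¹) ^ 2 := by
    have h1 : (b * a⁻¹) * (b * a⁻¹) ^ 2 = 1 := by rw [← pow_succ']; exact h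
    have h2 := inv_eq_of_mul_eq_one_right h1
    rw [← h2]; group
  have hsq : b * a⁻¹ * b * a⁻¹ = (b * a⁻¹) ^ 2 := by
    rw [pow_two, mul_assoc]
  have e2 : a * (b * a⁻¹ * b)⁻¹ = b * a⁻¹ := by
    rw [show a * (b * a⁻¹ * b)⁻¹ = (a * b⁻¹) * (a * b⁻¹) from by group, hinv,
      ← pow_add]
    calc (b * a⁻¹) ^ (2 + 2) = (b * a⁻¹) ^ 3 * (b * a⁻¹) := by rw [← pow_succ]
    _ = b * a⁻¹ := by rw [h, one_mul]
  have e4 : b * a⁻¹ * b * a⁻¹ = b * (b * a⁻¹ * b)⁻¹ := by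
    rw [show b * (b * a⁻¹ * b)⁻¹ = a * b⁻¹ from by group, hinv, hsq]
  refine ⟨by group, ?_, e2, e4, ?_, ?_⟩
  · rw [mul_inv_cancel_right]; exact e2.symm
  · rw [hinv, hsq]
  · rw [show b * (b * a⁻¹ * b)⁻¹ = a * b⁻¹ from by group]
end
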